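/- Let d ≥ 2 and n ≥ 2d be integers, and let X_1, …, X_n, X be independent random variables each uniformly distributed on (0,1). For j = 1, …, d−1 let l_j be an integer with 1 ≤ l_j ≤ n−1 and l_j/(n+1) ≤ j/d ≤ (l_j+1)/(n+1), and define q̂_j = (1 − (j/d)(n+1) + l_j)·X_{(l_j)} + ((j/d)(n+1) − l_j)·X_{(l_j+1)}, where X_{(l)} is the l-th order statistic of X_1, …, X_n; also set q̂_0 = 0 and q̂_d = 1. Then for every j = 1, …, d one has P(q̂_{j−1} < X ≤ q̂_j) = 1/d. -/

import Mathlib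

/-!
Extend the order statistics of the sample by `X₍₀₎ = 0` and `X₍ₙ₊₁₎ = 1`; then every `q̂ⱼ`,
including `q̂₀ = 0` and `q̂_d = 1`, is the piecewise linear interpolation of `k ↦ X₍ₖ₎` at
`pⱼ = j (n + 1) / d`, and is nondecreasing in `j`. Since the new observation `X` is uniform and
independent of the sample, `P(q̂ⱼ₋₁ < X ≤ q̂ⱼ) = E[q̂ⱼ] - E[q̂ⱼ₋₁]`. By exchangeability the rank of
`X` among all `n + 1` observations is uniform, so `E[X₍ₖ₎] = P(X ≤ X₍ₖ₎) = k / (n + 1)`, and by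
linearity `E[q̂ⱼ] = pⱼ / (n + 1) = j / d`.
-/

open MeasureTheory

/-- The `l`-th order statistic (1-based index `l = (k : ℕ) + 1`) of the finite family of
random variables `X i`, realized by sorting the sample at each outcome `ω`. -/
noncomputable def orderStat {Ω : Type*} {n : ℕ} (X : Fin n → Ω → ℝ) (k : Fin n) (ω : Ω) : ℝ :=
  X (Tuple.sort (fun i => X i ω) k) ω

open ProbabilityTheory Finset

theorem Finset.card_filter_univ_comp_equiv {α β : Type*} [Fintype α] [Fintype β] (e : α ≃ β)
    (p : β → Prop) [DecidablePred p] : #{a | p (e a)} = #{b | p b} := by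
  simp only [card_filter]
  exact e.sum_comp fun b => if p b then 1 else 0

theorem Fin.card_filter_univ_castSucc {n : ℕ} (p : Fin (n + 1) → Prop) [DecidablePred p]
    (h : ¬ p (Fin.last n)) : #{i | p i} = #{i : Fin n | p i.castSucc} := by
  simp only [card_filter, Fin.sum_univ_castSucc, h, if_false, add_zero]

theorem existsUnique_card_filter_lt_eq {ι α : Type*} [Fintype ι] [LinearOrder α] {y : ι → α}
    (hy : Function.Injective y) {m : ℕ} (hm : m < Fintype.card ι) :
    ∃! i, #{j | y j < y i} = m := by
  have hlt : ∀ a b, y a < y b → #{j | y j < y a} < #{j | y j < y b} := fun a b h =>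
    card_lt_card ⟨fun j hj => by simp only [mem_filter] at hj ⊢; exact ⟨hj.1, hj.2.trans h⟩,
      not_subset.2 ⟨a, by simpa using h, by simp⟩⟩
  let rank : ι → Fin (Fintype.card ι) := fun i =>
    ⟨#{j | y j < y i}, card_lt_card (filter_ssubset.2 ⟨i, mem_univ i, lt_irrefl _⟩)⟩
  have hrank : Function.Bijective rank := by
    refine (Fintype.bijective_iff_injective_and_card rank).2
      ⟨fun a b hab => ?_, (Fintype.card_fin _).symm⟩
    have hab : #{j | y j < y a} = #{j | y j < y b} := congrArg Fin.val hab
    rcases lt_trichotomy (y a) (y b) with h | h | h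
    exacts [absurd hab (hlt a b h).ne, hy h, absurd hab (hlt b a h).ne']
  simpa [rank, Fin.ext_iff] using hrank.existsUnique ⟨m, hm⟩

namespace Tuple

variable {n : ℕ} {α : Type*} [LinearOrder α]

theorem apply_sort_lt_iff (f : Fin n → α) (k : Fin n) (a : α) :
    f (sort f k) < a ↔ (k : ℕ) < #{i | f i < a} := by
  rw [← card_filter_univ_comp_equiv (sort f) (f · < a)]
  exact (lt_card_lt_iff_apply_lt_of_monotone (monotone_sort f)).symm

theorem le_apply_sort_iff (f : Fin n → α) (k : Fin n) (a : α) :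
    a ≤ f (sort f k) ↔ #{i | f i < a} ≤ k := by
  rw [← not_lt, apply_sort_lt_iff, not_lt]

end Tuple

theorem measurable_card_filter {β ι : Type*} [MeasurableSpace β] [Fintype ι]
    {p : ι → β → Prop} [∀ i x, Decidable (p i x)] (hp : ∀ i, MeasurableSet {x | p i x}) :
    Measurable fun x => #{i | p i x} := by
  simp only [card_filter]
  exact Finset.measurable_sum _ fun i _ => Measurable.ite (hp i) measurable_const measurable_const

theorem measurable_apply_sort {n : ℕ} (k : Fin n) :
    Measurable fun y : Fin n → ℝ => y (Tuple.sort y k) := by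
  refine measurable_of_Ici fun a => ?_
  simp only [Set.preimage, Set.mem_Ici, Tuple.le_apply_sort_iff]
  exact measurableSet_le (measurable_card_filter fun i =>
    measurableSet_lt (measurable_pi_apply i) measurable_const) measurable_const

def interpolate (s : ℕ → ℝ) (l : ℕ) (p : ℝ) : ℝ := (1 - p + l) * s l + (p - l) * s (l + 1)

section Interpolate

variable {s : ℕ → ℝ} {l : ℕ} {p : ℝ}

theorem interpolate_self (s : ℕ → ℝ) (l : ℕ) : interpolate s l l = s l := by
  simp [interpolate]

theorem interpolate_succ (s : ℕ → ℝ) (l : ℕ) : interpolate s l (l + 1) = s (l + 1) := by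
  simp [interpolate]

theorem left_le_interpolate (hs : s l ≤ s (l + 1)) (hp : l ≤ p) : s l ≤ interpolate s l p := by
  unfold interpolate; nlinarith

theorem interpolate_le_right (hs : s l ≤ s (l + 1)) (hp : p ≤ l + 1) :
    interpolate s l p ≤ s (l + 1) := by
  unfold interpolate; nlinarith

theorem interpolate_mem_Icc {a b : ℝ} (hl : s l ∈ Set.Icc a b) (hl' : s (l + 1) ∈ Set.Icc a b)
    (hp : p ∈ Set.Icc (l : ℝ) (l + 1)) : interpolate s l p ∈ Set.Icc a b := by
  obtain ⟨h₁, h₂⟩ := hp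
  unfold interpolate
  constructor <;> nlinarith [hl.1, hl.2, hl'.1, hl'.2]

theorem interpolate_le_interpolate (hs : Monotone s) {l₁ l₂ : ℕ} {p₁ p₂ : ℝ}
    (h₁ : p₁ ∈ Set.Icc (l₁ : ℝ) (l₁ + 1)) (h₂ : p₂ ∈ Set.Icc (l₂ : ℝ) (l₂ + 1)) (hp : p₁ ≤ p₂) :
    interpolate s l₁ p₁ ≤ interpolate s l₂ p₂ := by
  rcases lt_trichotomy l₁ l₂ with hl | rfl | hl
  · calc interpolate s l₁ p₁ ≤ s (l₁ + 1) := interpolate_le_right (hs l₁.le_succ) h₁.2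
      _ ≤ s l₂ := hs hl
      _ ≤ interpolate s l₂ p₂ := left_le_interpolate (hs l₂.le_succ) h₂.1
  · have := hs l₁.le_succ
    unfold interpolate; nlinarith
  · -- the two segments can only share the knot `p₁ = p₂ = l₁ = l₂ + 1`
    have hl' : (l₂ : ℝ) + 1 ≤ l₁ := by exact_mod_cast hl
    obtain rfl : p₁ = l₁ := by linarith [h₁.1, h₂.2]
    obtain rfl : p₂ = l₂ + 1 := by linarith [h₁.1, h₂.2]
    obtain rfl : l₁ = l₂ + 1 := by exact_mod_cast le_antisymm (by linarith) hl'
    rw [interpolate_succ, interpolate_self]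

theorem integral_interpolate {α : Type*} [MeasurableSpace α] {μ : Measure α} {S : ℕ → α → ℝ}
    (h : Integrable (S l) μ) (h' : Integrable (S (l + 1)) μ) :
    ∫ x, interpolate (S · x) l p ∂μ = interpolate (fun k => ∫ x, S k x ∂μ) l p := by
  simp only [interpolate]
  rw [integral_add (h.const_mul _) (h'.const_mul _), integral_const_mul, integral_const_mul]

end Interpolate

/-- For `1 ≤ k ≤ n` this is `orderStat` at index `k - 1`; the values `0` and `1` outside that range
make `q̂₀ = 0` and `q̂_d = 1` interpolated order statistics too. -/
noncomputable def extOrderStat {n : ℕ} (y : Fin n → ℝ) (k : ℕ) : ℝ :=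
  if k = 0 then 0 else if h : k - 1 < n then y (Tuple.sort y ⟨k - 1, h⟩) else 1

section ExtOrderStat

variable {n : ℕ} (y : Fin n → ℝ)

theorem extOrderStat_of_lt {k : ℕ} (hk : k < n) :
    extOrderStat y (k + 1) = y (Tuple.sort y ⟨k, hk⟩) := by
  simp [extOrderStat, hk]

theorem extOrderStat_of_le {k : ℕ} (hk : n + 1 ≤ k) : extOrderStat y k = 1 := by
  simp [extOrderStat, show k ≠ 0 by omega, show ¬ k - 1 < n by omega]

theorem interpolate_extOrderStat_zero : interpolate (extOrderStat y) 0 0 = 0 := by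
  simp [interpolate, extOrderStat]

theorem interpolate_extOrderStat_last : interpolate (extOrderStat y) n (n + 1) = 1 := by
  rw [interpolate_succ, extOrderStat_of_le y le_rfl]

theorem interpolate_extOrderStat_of_lt {l : ℕ} (hl₀ : l ≠ 0) (hl : l < n) (p : ℝ) :
    interpolate (extOrderStat y) l p =
      (1 - p + l) * y (Tuple.sort y ⟨l - 1, by omega⟩) + (p - l) * y (Tuple.sort y ⟨l, hl⟩) := by
  obtain ⟨k, rfl⟩ := Nat.exists_eq_succ_of_ne_zero hl₀
  simp only [interpolate, extOrderStat_of_lt y hl, extOrderStat_of_lt y (by omega : k < n)]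
  rfl

variable {y}

theorem extOrderStat_mem_Icc (hy : ∀ i, y i ∈ Set.Icc 0 1) (k : ℕ) :
    extOrderStat y k ∈ Set.Icc 0 1 := by
  unfold extOrderStat
  split_ifs
  exacts [⟨le_rfl, zero_le_one⟩, hy _, ⟨zero_le_one, le_rfl⟩]

theorem monotone_extOrderStat (hy : ∀ i, y i ∈ Set.Icc 0 1) : Monotone (extOrderStat y) := by
  refine monotone_nat_of_le_succ fun k => ?_
  rcases Nat.lt_or_ge k n with hk | hk
  · rw [extOrderStat_of_lt y hk]
    rcases k with _ | k
    · exact (hy _).1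
    · rw [extOrderStat_of_lt y (by omega : k < n)]
      exact Tuple.monotone_sort y (Fin.mk_le_mk.2 k.le_succ)
  · rw [extOrderStat_of_le y (by omega : n + 1 ≤ k + 1)]
    exact (extOrderStat_mem_Icc hy k).2

theorem measurable_extOrderStat (k : ℕ) :
    Measurable fun y : Fin n → ℝ => extOrderStat y k := by
  unfold extOrderStat
  split_ifs
  exacts [measurable_const, measurable_apply_sort _, measurable_const]

end ExtOrderStat

theorem volume_restrict_Ioo_zero_one_Iic {z : ℝ} (hz : z ∈ Set.Icc 0 1) :
    volume.restrict (Set.Ioo 0 1) (Set.Iic z) = ENNReal.ofReal z := by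
  rw [Measure.restrict_apply measurableSet_Iic]
  refine le_antisymm ?_ ?_
  · calc volume (Set.Iic z ∩ Set.Ioo 0 1) ≤ volume (Set.Ioc 0 z) :=
          measure_mono fun x hx => ⟨hx.2.1, hx.1⟩
      _ = ENNReal.ofReal z := by rw [Real.volume_Ioc, sub_zero]
  · calc ENNReal.ofReal z = volume (Set.Ioo 0 z) := by rw [Real.volume_Ioo, sub_zero]
      _ ≤ volume (Set.Iic z ∩ Set.Ioo 0 1) :=
          measure_mono fun x hx => ⟨hx.2.le, hx.1, hx.2.trans_le hz.2⟩

section Independence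

variable {Ω : Type*} [MeasurableSpace Ω] {P : Measure Ω} [IsProbabilityMeasure P] {U : Ω → ℝ}

/-- Fubini on the joint law `P.map (U, Z) = (uniform on (0, 1)) ⊗ P.map Z`. -/
theorem measure_uniform_le_eq_integral {Z : Ω → ℝ} (hU : Measurable U) (hZ : Measurable Z)
    (hUZ : IndepFun U Z P) (hlaw : P.map U = volume.restrict (Set.Ioo 0 1))
    (hZ01 : ∀ᵐ ω ∂P, Z ω ∈ Set.Icc 0 1) :
    P {ω | U ω ≤ Z ω} = ENNReal.ofReal (∫ ω, Z ω ∂P) := by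
  have hS : MeasurableSet {q : ℝ × ℝ | q.1 ≤ q.2} := measurableSet_le measurable_fst measurable_snd
  have hZ01' : ∀ᵐ z ∂P.map Z, z ∈ Set.Icc 0 1 :=
    (ae_map_iff hZ.aemeasurable measurableSet_Icc).2 hZ01
  calc P {ω | U ω ≤ Z ω} = (P.map fun ω => (U ω, Z ω)) {q | q.1 ≤ q.2} :=
        (Measure.map_apply (hU.prodMk hZ) hS).symm
    _ = ∫⁻ z, volume.restrict (Set.Ioo 0 1) (Set.Iic z) ∂P.map Z := by
        rw [(indepFun_iff_map_prod_eq_prod_map_map hU.aemeasurable hZ.aemeasurable).1 hUZ,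
          Measure.prod_apply_symm hS, hlaw]
        rfl
    _ = ∫⁻ z, ENNReal.ofReal z ∂P.map Z :=
        lintegral_congr_ae (hZ01'.mono fun z hz => volume_restrict_Ioo_zero_one_Iic hz)
    _ = ∫⁻ ω, ENNReal.ofReal (Z ω) ∂P := lintegral_map ENNReal.measurable_ofReal hZ
    _ = ENNReal.ofReal (∫ ω, Z ω ∂P) :=
        (ofReal_integral_eq_lintegral_ofReal (.of_mem_Icc 0 1 hZ.aemeasurable hZ01)
          (hZ01.mono fun ω h => h.1)).symm

theorem measure_uniform_mem_Ioc_eq_integral_sub {Z₁ Z₂ : Ω → ℝ} (hU : Measurable U)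
    (hZ₁ : Measurable Z₁) (hZ₂ : Measurable Z₂) (hUZ₁ : IndepFun U Z₁ P) (hUZ₂ : IndepFun U Z₂ P)
    (hlaw : P.map U = volume.restrict (Set.Ioo 0 1)) (hZ₁01 : ∀ᵐ ω ∂P, Z₁ ω ∈ Set.Icc 0 1)
    (hZ₂01 : ∀ᵐ ω ∂P, Z₂ ω ∈ Set.Icc 0 1) (hZ₁₂ : ∀ᵐ ω ∂P, Z₁ ω ≤ Z₂ ω) :
    P {ω | Z₁ ω < U ω ∧ U ω ≤ Z₂ ω} = ENNReal.ofReal ((∫ ω, Z₂ ω ∂P) - ∫ ω, Z₁ ω ∂P) := by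
  have hdiff : {ω | Z₁ ω < U ω ∧ U ω ≤ Z₂ ω} = {ω | U ω ≤ Z₂ ω} \ {ω | U ω ≤ Z₁ ω} := by
    ext ω; simp [and_comm]
  have hsub : {ω | U ω ≤ Z₁ ω} ≤ᵐ[P] {ω | U ω ≤ Z₂ ω} :=
    hZ₁₂.mono fun ω h (h₁ : U ω ≤ Z₁ ω) => h₁.trans h
  rw [hdiff, measure_sdiff' _ (measurableSet_le hU hZ₁).nullMeasurableSet (measure_ne_top _ _),
    measure_congr (union_ae_eq_left_iff_ae_subset.2 hsub),
    measure_uniform_le_eq_integral hU hZ₂ hUZ₂ hlaw hZ₂01,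
    measure_uniform_le_eq_integral hU hZ₁ hUZ₁ hlaw hZ₁01,
    ENNReal.ofReal_sub _ (integral_nonneg_of_ae (hZ₁01.mono fun ω h => h.1))]

theorem ProbabilityTheory.IndepFun.measure_eq_eq_zero {V W : Ω → ℝ} (hV : Measurable V)
    (hW : Measurable W) (hVW : IndepFun V W P) {ν : Measure ℝ} [NullSingletonClass ν]
    (hlaw : P.map V = ν) : P {ω | V ω = W ω} = 0 := by
  have hS : MeasurableSet {q : ℝ × ℝ | q.1 = q.2} :=
    measurableSet_eq_fun measurable_fst measurable_snd
  rw [show {ω | V ω = W ω} = (fun ω => (V ω, W ω)) ⁻¹' {q | q.1 = q.2} from rfl,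
    ← Measure.map_apply (hV.prodMk hW) hS,
    (indepFun_iff_map_prod_eq_prod_map_map hV.aemeasurable hW.aemeasurable).1 hVW,
    Measure.prod_apply_symm hS, hlaw]
  simp

end Independence

section IID

variable {Ω ι β : Type*} [MeasurableSpace Ω] {P : Measure Ω} [Fintype ι] [MeasurableSpace β]
  {X : ι → Ω → β} {ν : Measure β}

theorem ProbabilityTheory.iIndepFun.measure_mem_eq_pi (hX : ∀ i, Measurable (X i))
    (hind : iIndepFun X P) (hlaw : ∀ i, P.map (X i) = ν) {B : Set (ι → β)}
    (hB : MeasurableSet B) : P {ω | (fun i => X i ω) ∈ B} = Measure.pi (fun _ => ν) B := by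
  rw [show {ω | (fun i => X i ω) ∈ B} = (fun ω i => X i ω) ⁻¹' B from rfl,
    ← Measure.map_apply (measurable_pi_lambda _ hX) hB,
    hind.map_fun_eq_pi_map fun i => (hX i).aemeasurable]
  simp only [hlaw]

theorem ProbabilityTheory.iIndepFun.measure_comp_perm (hX : ∀ i, Measurable (X i))
    (hind : iIndepFun X P) (hlaw : ∀ i, P.map (X i) = ν) (σ : Equiv.Perm ι) {B : Set (ι → β)}
    (hB : MeasurableSet B) :
    P {ω | (fun i => X (σ i) ω) ∈ B} = P {ω | (fun i => X i ω) ∈ B} := by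
  rw [(hind.precomp σ.injective).measure_mem_eq_pi (fun i => hX (σ i)) (fun i => hlaw _) hB,
    hind.measure_mem_eq_pi hX hlaw hB]

end IID

section Ranks

variable {Ω ι : Type*} [MeasurableSpace Ω] {P : Measure Ω} [IsProbabilityMeasure P] [Fintype ι]
  {X : ι → Ω → ℝ} {ν : Measure ℝ} [NullSingletonClass ν]

theorem ae_injective_of_iIndepFun (hX : ∀ i, Measurable (X i)) (hind : iIndepFun X P)
    (hlaw : ∀ i, P.map (X i) = ν) : ∀ᵐ ω ∂P, Function.Injective fun i => X i ω := by
  have hne : ∀ᵐ ω ∂P, ∀ a b, a ≠ b → X a ω ≠ X b ω := by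
    refine ae_all_iff.2 fun a => ae_all_iff.2 fun b => ?_
    by_cases hab : a = b
    · exact ae_of_all _ fun _ h => absurd hab h
    · exact (measure_eq_zero_iff_ae_notMem.1
        ((hind.indepFun hab).measure_eq_eq_zero (hX a) (hX b) (hlaw a))).mono fun ω h _ => h
  exact hne.mono fun ω h a b hab => not_not.1 fun hne' => h a b hne' hab

/-- By exchangeability all ranks have the same law, and the observations are a.s. distinct, so
exactly one of them has rank `m`. -/
theorem measure_card_filter_lt_eq_inv_card [DecidableEq ι] (hX : ∀ i, Measurable (X i))
    (hind : iIndepFun X P) (hlaw : ∀ i, P.map (X i) = ν) (i : ι) {m : ℕ}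
    (hm : m < Fintype.card ι) :
    P {ω | #{j | X j ω < X i ω} = m} = (Fintype.card ι : ENNReal)⁻¹ := by
  set A : ι → Set Ω := fun k => {ω | #{j | X j ω < X k ω} = m}
  have hA : ∀ k, MeasurableSet (A k) := fun k =>
    measurableSet_eq_fun (measurable_card_filter fun j => measurableSet_lt (hX j) (hX k))
      measurable_const
  have hinj := ae_injective_of_iIndepFun hX hind hlaw
  have hsame : ∀ i', P (A i') = P (A i) := by
    intro i'
    have hσ := hind.measure_comp_perm hX hlaw (Equiv.swap i i')
      (B := {y | #{j | y j < y i} = m}) (measurableSet_eq_fun (measurable_card_filter fun j =>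
        measurableSet_lt (measurable_pi_apply j) (measurable_pi_apply i)) measurable_const)
    have hcard : ∀ ω, #{j | X (Equiv.swap i i' j) ω < X i' ω} = #{j | X j ω < X i' ω} :=
      fun ω => card_filter_univ_comp_equiv _ fun j => X j ω < X i' ω
    simpa only [Set.mem_ofPred_eq, Equiv.swap_apply_left, hcard] using hσ
  have hdisj : Pairwise (Function.onFun (AEDisjoint P) A) := fun a b hab =>
    measure_eq_zero_iff_ae_notMem.2 (hinj.mono fun ω hω hab' =>
      hab ((existsUnique_card_filter_lt_eq hω hm).unique hab'.1 hab'.2))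
  have hcover : P (⋃ i, A i) = 1 := by
    rw [← prob_compl_eq_zero_iff (MeasurableSet.iUnion hA)]
    refine measure_eq_zero_iff_ae_notMem.2 (hinj.mono fun ω hω => ?_)
    obtain ⟨i', hi', -⟩ := existsUnique_card_filter_lt_eq hω hm
    exact fun h => h (Set.mem_iUnion.2 ⟨i', hi'⟩)
  have hsum : ∑ i', P (A i') = 1 := by
    rw [← hcover, measure_iUnion₀ hdisj fun k => (hA k).nullMeasurableSet, tsum_fintype]
  rw [Finset.sum_congr rfl fun i' _ => hsame i', sum_const, card_univ, nsmul_eq_mul] at hsum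
  exact ENNReal.eq_inv_of_mul_eq_one_left ((mul_comm _ _).trans hsum)

end Ranks

section Sample

variable {Ω : Type*} [MeasurableSpace Ω] {P : Measure Ω} {n : ℕ} {X : Fin (n + 1) → Ω → ℝ}

theorem indepFun_last_castSucc (hX : ∀ i, Measurable (X i)) (hind : iIndepFun X P) :
    IndepFun (X (Fin.last n)) (fun ω i => X (Fin.castSucc i) ω) P := by
  have h := hind.indepFun_finset {Fin.last n} (univ.map Fin.castSuccEmb)
    (disjoint_singleton_left.2 (by simp [Fin.castSucc_ne_last])) hX
  exact h.comp
    (measurable_pi_apply (⟨Fin.last n, mem_singleton_self _⟩ : ({Fin.last n} : Finset _)))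
    (measurable_pi_lambda (fun v (i : Fin n) => v ⟨i.castSucc, by simp⟩)
      fun _ => measurable_pi_apply _)

theorem ae_castSucc_mem_Icc (hX : ∀ i, Measurable (X i))
    (hunif : ∀ i, P.map (X i) = volume.restrict (Set.Ioo 0 1)) :
    ∀ᵐ ω ∂P, ∀ i : Fin n, X (Fin.castSucc i) ω ∈ Set.Icc 0 1 :=
  ae_all_iff.2 fun i => ae_of_ae_map (hX _).aemeasurable
    (by rw [hunif]; exact (ae_restrict_mem measurableSet_Ioo).mono fun _ h => Set.Ioo_subset_Icc_self h)

variable [IsProbabilityMeasure P]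

/-- `X ≤ X₍ₖ₊₁₎` says that the new observation `X = X (Fin.last n)` has rank at most `k` among
all `n + 1` observations. -/
theorem measure_last_le_extOrderStat (hX : ∀ i, Measurable (X i)) (hind : iIndepFun X P)
    (hunif : ∀ i, P.map (X i) = volume.restrict (Set.Ioo 0 1)) {k : ℕ} (hk : k < n) :
    P {ω | X (Fin.last n) ω ≤ extOrderStat (fun i => X (Fin.castSucc i) ω) (k + 1)} =
      (k + 1) * ((n + 1 : ℕ) : ENNReal)⁻¹ := by
  have hrank : {ω | X (Fin.last n) ω ≤ extOrderStat (fun i => X (Fin.castSucc i) ω) (k + 1)}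
      = ⋃ m ∈ Finset.range (k + 1), {ω | #{j | X j ω < X (Fin.last n) ω} = m} := by
    ext ω
    simp only [extOrderStat_of_lt _ hk, Set.mem_ofPred_eq, Set.mem_iUnion, Finset.mem_range,
      Fin.card_filter_univ_castSucc (fun j => X j ω < X (Fin.last n) ω) (lt_irrefl _),
      exists_prop, exists_eq_right', Nat.lt_succ_iff]
    exact Tuple.le_apply_sort_iff (fun i => X i.castSucc ω) _ _
  have hdisj : Set.PairwiseDisjoint (Finset.range (k + 1) : Set ℕ)
      fun m => {ω | #{j | X j ω < X (Fin.last n) ω} = m} :=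
    fun a _ b _ hab => Set.disjoint_left.2 fun ω ha hb => hab (ha.symm.trans hb)
  rw [hrank, measure_biUnion_finset hdisj fun m _ => measurableSet_eq_fun
      (measurable_card_filter fun j => measurableSet_lt (hX j) (hX _)) measurable_const,
    Finset.sum_congr rfl fun m hm => measure_card_filter_lt_eq_inv_card hX hind hunif
      (Fin.last n) (by rw [Fintype.card_fin]; exact (Finset.mem_range.1 hm).trans_le (by omega)),
    sum_const, card_range, nsmul_eq_mul, Fintype.card_fin]
  push_cast
  rfl

theorem integral_extOrderStat (hX : ∀ i, Measurable (X i)) (hind : iIndepFun X P)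
    (hunif : ∀ i, P.map (X i) = volume.restrict (Set.Ioo 0 1)) {k : ℕ} (hk : k ≤ n + 1) :
    ∫ ω, extOrderStat (fun i => X (Fin.castSucc i) ω) k ∂P = k / (n + 1) := by
  obtain rfl | hk := hk.eq_or_lt
  · simp [extOrderStat_of_le _ le_rfl, div_self (by positivity : (n : ℝ) + 1 ≠ 0)]
  obtain _ | k := k
  · simp [extOrderStat]
  have hsample := ae_castSucc_mem_Icc hX hunif
  have hprob := measure_uniform_le_eq_integral
    (Z := fun ω => extOrderStat (fun i => X (Fin.castSucc i) ω) (k + 1)) (hX _)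
    ((measurable_extOrderStat (k + 1)).comp (measurable_pi_lambda _ fun _ => hX _))
    ((indepFun_last_castSucc hX hind).comp measurable_id (measurable_extOrderStat (k + 1)))
    (hunif _)
    (hsample.mono fun ω h => extOrderStat_mem_Icc h _)
  rw [measure_last_le_extOrderStat hX hind hunif (by omega)] at hprob
  rw [← ENNReal.toReal_ofReal (integral_nonneg_of_ae
    (hsample.mono fun ω h => (extOrderStat_mem_Icc h (k + 1)).1)), ← hprob]
  simp [ENNReal.toReal_inv, div_eq_mul_inv, ENNReal.toReal_add]

theorem integral_interpolate_extOrderStat (hX : ∀ i, Measurable (X i)) (hind : iIndepFun X P)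
    (hunif : ∀ i, P.map (X i) = volume.restrict (Set.Ioo 0 1)) {L : ℕ} (hL : L ≤ n) (p : ℝ) :
    ∫ ω, interpolate (extOrderStat fun i => X (Fin.castSucc i) ω) L p ∂P = p / (n + 1) := by
  have hint : ∀ k, Integrable (fun ω => extOrderStat (fun i => X (Fin.castSucc i) ω) k) P :=
    fun k => .of_mem_Icc 0 1
      ((measurable_extOrderStat k).comp (measurable_pi_lambda _ fun _ => hX _)).aemeasurable
      ((ae_castSucc_mem_Icc hX hunif).mono fun ω h => extOrderStat_mem_Icc h k)
  rw [integral_interpolate (S := fun k ω => extOrderStat (fun i => X (Fin.castSucc i) ω) k)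
    (hint L) (hint (L + 1))]
  simp only [interpolate, integral_extOrderStat hX hind hunif (by omega : L ≤ n + 1),
    integral_extOrderStat hX hind hunif (by omega : L + 1 ≤ n + 1)]
  push_cast
  field_simp
  ring

theorem measure_interpolate_lt_last_le (hX : ∀ i, Measurable (X i)) (hind : iIndepFun X P)
    (hunif : ∀ i, P.map (X i) = volume.restrict (Set.Ioo 0 1)) {L₁ L₂ : ℕ} {p₁ p₂ : ℝ}
    (hL₁ : L₁ ≤ n) (hL₂ : L₂ ≤ n) (hp₁ : p₁ ∈ Set.Icc (L₁ : ℝ) (L₁ + 1))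
    (hp₂ : p₂ ∈ Set.Icc (L₂ : ℝ) (L₂ + 1)) (hp : p₁ ≤ p₂) :
    P {ω | interpolate (extOrderStat fun i => X (Fin.castSucc i) ω) L₁ p₁ < X (Fin.last n) ω ∧
        X (Fin.last n) ω ≤ interpolate (extOrderStat fun i => X (Fin.castSucc i) ω) L₂ p₂} =
      ENNReal.ofReal ((p₂ - p₁) / (n + 1)) := by
  have hmeas : ∀ L p, Measurable fun y : Fin n → ℝ => interpolate (extOrderStat y) L p :=
    fun L p => ((measurable_extOrderStat L).const_mul _).add
      ((measurable_extOrderStat (L + 1)).const_mul _)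
  have hY : Measurable fun ω (i : Fin n) => X (Fin.castSucc i) ω :=
    measurable_pi_lambda _ fun _ => hX _
  have hindep := indepFun_last_castSucc hX hind
  have hsample := ae_castSucc_mem_Icc hX hunif
  have h01 : ∀ {L : ℕ} {p : ℝ}, p ∈ Set.Icc (L : ℝ) (L + 1) →
      ∀ᵐ ω ∂P, interpolate (extOrderStat fun i => X (Fin.castSucc i) ω) L p ∈ Set.Icc 0 1 :=
    fun hp => hsample.mono fun ω h =>
      interpolate_mem_Icc (extOrderStat_mem_Icc h _) (extOrderStat_mem_Icc h _) hp
  rw [measure_uniform_mem_Ioc_eq_integral_sub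
      (Z₁ := fun ω => interpolate (extOrderStat fun i => X (Fin.castSucc i) ω) L₁ p₁)
      (Z₂ := fun ω => interpolate (extOrderStat fun i => X (Fin.castSucc i) ω) L₂ p₂) (hX _)
      ((hmeas L₁ p₁).comp hY) ((hmeas L₂ p₂).comp hY)
      (hindep.comp measurable_id (hmeas L₁ p₁)) (hindep.comp measurable_id (hmeas L₂ p₂))
      (hunif _) (h01 hp₁) (h01 hp₂) (hsample.mono fun ω h =>
        interpolate_le_interpolate (monotone_extOrderStat h) hp₁ hp₂ hp),
    integral_interpolate_extOrderStat hX hind hunif hL₁,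
    integral_interpolate_extOrderStat hX hind hunif hL₂, sub_div]

end Sample

/-- **Each cell of the estimated left-to-right partition has probability `1/d`.**
Let `d ≥ 2`, `n ≥ 2d`, and let `X 1, …, X n, X` be i.i.d. uniform on `(0,1)` (here
`X = X (Fin.last n)`).  For `j = 1, …, d-1`, `q̂ j` is the interpolated sample quantile at
level `j/d` built from the order statistics of the first `n` variables (with
`1 ≤ l j ≤ n - 1` and `l j/(n+1) ≤ j/d ≤ (l j + 1)/(n+1)`), and `q̂ 0 = 0`, `q̂ d = 1`.
Then `P(q̂ (j-1) < X ≤ q̂ j) = 1/d` for every `j = 1, …, d`. -/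
theorem estimated_partition_left_to_right {Ω : Type*} [MeasurableSpace Ω]
    (P : Measure Ω) [IsProbabilityMeasure P]
    (d n : ℕ) (hn : 2 * d ≤ n)
    (X : Fin (n + 1) → Ω → ℝ) (hXm : ∀ i, Measurable (X i))
    (hindep : ProbabilityTheory.iIndepFun X P)
    (hunif : ∀ i, P.map (X i) = volume.restrict (Set.Ioo (0 : ℝ) 1))
    (l : ℕ → ℕ) (hl1 : ∀ j, 1 ≤ j → j ≤ d - 1 → 1 ≤ l j) (hl2 : ∀ j, 1 ≤ j → j ≤ d - 1 → l j ≤ n - 1)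
    (hl3 : ∀ j, 1 ≤ j → j ≤ d - 1 → (l j : ℝ) / ((n : ℝ) + 1) ≤ (j : ℝ) / d)
    (hl4 : ∀ j, 1 ≤ j → j ≤ d - 1 → (j : ℝ) / d ≤ ((l j : ℝ) + 1) / ((n : ℝ) + 1))
    (qhat : ℕ → Ω → ℝ)
    (hqhat : ∀ j (h1 : 1 ≤ j) (h2 : j ≤ d - 1), ∀ ω, qhat j ω =
      (1 - (j : ℝ) / d * ((n : ℝ) + 1) + l j) *
          orderStat (fun i : Fin n => X i.castSucc) ⟨l j - 1, by have := hl2 j h1 h2; have := hl1 j h1 h2; omega⟩ ω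
        + ((j : ℝ) / d * ((n : ℝ) + 1) - l j) *
          orderStat (fun i : Fin n => X i.castSucc) ⟨l j, by have := hl2 j h1 h2; omega⟩ ω)
    (hqhat0 : ∀ ω, qhat 0 ω = 0) (hqhatd : ∀ ω, qhat d ω = 1) :
    ∀ j, 1 ≤ j → j ≤ d →
      P {ω | qhat (j - 1) ω < X (Fin.last n) ω ∧ X (Fin.last n) ω ≤ qhat j ω} =
        (d : ENNReal)⁻¹ := by
  intro j hj1 hjd
  have hd : (d : ℝ) ≠ 0 := Nat.cast_ne_zero.2 (by omega)
  have hquantile : ∀ j ≤ d, ∃ L ≤ n, (j / d * (n + 1) : ℝ) ∈ Set.Icc (L : ℝ) (L + 1) ∧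
      ∀ ω, qhat j ω = interpolate (extOrderStat fun i => X (Fin.castSucc i) ω) L (j / d * (n + 1)) := by
    intro j hj
    rcases Nat.eq_zero_or_pos j with rfl | hj0
    · exact ⟨0, Nat.zero_le n, by simp, fun ω => by simp [hqhat0, interpolate_extOrderStat_zero]⟩
    rcases hj.eq_or_lt with rfl | hjd
    · refine ⟨n, le_rfl, by simp [hd], fun ω => ?_⟩
      rw [hqhatd, div_self hd, one_mul, interpolate_extOrderStat_last]
    have hl1 := hl1 j hj0 (by omega)
    have hl2 := hl2 j hj0 (by omega)
    refine ⟨l j, by omega, ⟨?_, ?_⟩, fun ω => ?_⟩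
    · linarith [(div_le_iff₀ (by positivity)).1 (hl3 j hj0 (by omega))]
    · linarith [(le_div_iff₀ (by positivity)).1 (hl4 j hj0 (by omega))]
    · rw [hqhat j hj0 (by omega), interpolate_extOrderStat_of_lt _ (by omega) (by omega)]
      rfl
  obtain ⟨L₁, hL₁, hp₁, hq₁⟩ := hquantile (j - 1) (by omega)
  obtain ⟨L₂, hL₂, hp₂, hq₂⟩ := hquantile j hjd
  simp only [hq₁, hq₂]
  have hwidth : ((j : ℝ) / d * (n + 1) - (j - 1 : ℕ) / d * (n + 1)) / (n + 1) = (d : ℝ)⁻¹ := by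
    rw [Nat.cast_sub hj1, Nat.cast_one]
    field_simp
    ring
  rw [measure_interpolate_lt_last_le hXm hindep hunif hL₁ hL₂ hp₁ hp₂ (by gcongr; omega), hwidth,
    ENNReal.ofReal_inv_of_pos (by positivity), ENNReal.ofReal_natCast]
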